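/- arXiv:0806.1293 — 2 statements merged into one kernel-verified Lean document; each statement's English description precedes it below -/
import Mathlib

section
/- Let α : ℝ≥0 → ℝ≥0 be continuous, strictly increasing with α(0) = 0 (class-K), and let y : ℝ≥0 → ℝ≥0 be continuous with ∫₀^∞ α(y(t)) dt < ∞ and satisfying the one-sided growth bound: for some ε > 0 and L > 0, whenever 0 < y(t) < ε, y'(t) exists and |y'(t)| ≤ L y(t). If moreover y takes values arbitrarily close to 0 along some divergent time sequence, then lim_{t→∞} y(t) = 0. -/
open Set Filter MeasureTheory

/-- Persistence: if `y(t0) ≥ δ` then `y ≥ δ/2` on `[t0, t0 + log 2 / L]`. -/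
lemma barbalat_persist (y : ℝ → ℝ) (hy : Continuous y) (ε L : ℝ) (hL : 0 < L)
    (hgrowth : ∀ t ≥ 0, 0 < y t → y t < ε →
      ∃ d : ℝ, HasDerivAt y d t ∧ |d| ≤ L * y t)
    (δ : ℝ) (hδ : 0 < δ) (hδε : δ < ε)
    (t0 : ℝ) (ht0 : 0 ≤ t0) (hyt0 : δ ≤ y t0)
    (u : ℝ) (hu : u ∈ Set.Icc t0 (t0 + Real.log 2 / L)) :
    δ / 2 ≤ y u := by
  by_contra hcon
  push_neg at hcon
  have hc : 0 < Real.log 2 / L := div_pos (Real.log_pos one_lt_two) hL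
  -- last time before u when y ≥ δ
  have hScomp : IsCompact (Set.Icc t0 u ∩ y ⁻¹' Set.Ici δ) :=
    isCompact_Icc.inter_right (isClosed_Ici.preimage hy)
  have hSne : (Set.Icc t0 u ∩ y ⁻¹' Set.Ici δ).Nonempty := ⟨t0, ⟨le_rfl, hu.1⟩, hyt0⟩
  obtain ⟨u0, hu0S, hu0ub⟩ : ∃ u0, u0 ∈ Set.Icc t0 u ∩ y ⁻¹' Set.Ici δ ∧
      ∀ s ∈ Set.Icc t0 u ∩ y ⁻¹' Set.Ici δ, s ≤ u0 :=
    ⟨sSup _, hScomp.sSup_mem hSne, fun s hs => le_csSup hScomp.bddAbove hs⟩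
  have hu0l : t0 ≤ u0 := hu0S.1.1
  have hu0r : u0 ≤ u := hu0S.1.2
  have hyu0 : δ ≤ y u0 := hu0S.2
  -- first time after u0 when y ≤ δ/2
  have hTcomp : IsCompact (Set.Icc u0 u ∩ y ⁻¹' Set.Iic (δ / 2)) :=
    isCompact_Icc.inter_right (isClosed_Iic.preimage hy)
  have hTne : (Set.Icc u0 u ∩ y ⁻¹' Set.Iic (δ / 2)).Nonempty :=
    ⟨u, ⟨hu0r, le_rfl⟩, le_of_lt hcon⟩
  obtain ⟨v, hvT, hvlb⟩ : ∃ v, v ∈ Set.Icc u0 u ∩ y ⁻¹' Set.Iic (δ / 2) ∧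
      ∀ s ∈ Set.Icc u0 u ∩ y ⁻¹' Set.Iic (δ / 2), v ≤ s :=
    ⟨sInf _, hTcomp.sInf_mem hTne, fun s hs => csInf_le hTcomp.bddBelow hs⟩
  have hvl : u0 ≤ v := hvT.1.1
  have hvr : v ≤ u := hvT.1.2
  have hyv : y v ≤ δ / 2 := hvT.2
  -- on the open interval, δ/2 < y < δ
  have hmid : ∀ s ∈ Set.Ioo u0 v, δ / 2 < y s ∧ y s < δ := by
    intro s hs
    constructor
    · by_contra h
      push_neg at h
      exact absurd (hvlb s ⟨⟨le_of_lt hs.1, le_trans (le_of_lt hs.2) hvr⟩, h⟩)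
        (not_le.2 hs.2)
    · by_contra h
      push_neg at h
      exact absurd (hu0ub s ⟨⟨le_trans hu0l (le_of_lt hs.1), le_trans (le_of_lt hs.2) hvr⟩, h⟩)
        (not_le.2 hs.1)
  -- the auxiliary function g = y * exp(L t) is monotone on [u0, v]
  have hgcont : Continuous (fun s => y s * Real.exp (L * s)) :=
    hy.mul (Real.continuous_exp.comp (continuous_const.mul continuous_id))
  have key : ∀ s ∈ Set.Ioo u0 v, DifferentiableAt ℝ (fun s => y s * Real.exp (L * s)) s ∧
      0 ≤ deriv (fun s => y s * Real.exp (L * s)) s := by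
    intro s hs
    obtain ⟨h1, h2⟩ := hmid s hs
    obtain ⟨d, hd, hdb⟩ := hgrowth s (le_trans ht0 (le_trans hu0l (le_of_lt hs.1)))
      (lt_of_lt_of_le (by linarith) (le_of_lt h1)) (lt_trans h2 hδε)
    have hlin : HasDerivAt (fun x : ℝ => L * x) L s := by
      simpa using (hasDerivAt_id s).const_mul L
    have hexp : HasDerivAt (fun x : ℝ => Real.exp (L * x)) (Real.exp (L * s) * L) s := hlin.exp
    have hgd : HasDerivAt (fun s => y s * Real.exp (L * s))
        (d * Real.exp (L * s) + y s * (Real.exp (L * s) * L)) s := hd.mul hexp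
    refine ⟨hgd.differentiableAt, ?_⟩
    rw [hgd.deriv]
    have hb := abs_le.mp hdb
    nlinarith [Real.exp_pos (L * s), hb.1]
  have hmono : MonotoneOn (fun s => y s * Real.exp (L * s)) (Set.Icc u0 v) := by
    apply monotoneOn_of_deriv_nonneg (convex_Icc u0 v) hgcont.continuousOn
    · intro s hs
      rw [interior_Icc] at hs
      exact (key s hs).1.differentiableWithinAt
    · intro s hs
      rw [interior_Icc] at hs
      exact (key s hs).2
  have hgle : y u0 * Real.exp (L * u0) ≤ y v * Real.exp (L * v) :=
    hmono ⟨le_rfl, hvl⟩ ⟨hvl, le_rfl⟩ hvl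
  -- from monotonicity: 2 e^{L u0} ≤ e^{L v}, hence log 2 / L ≤ v - u0
  have h2exp : 2 * Real.exp (L * u0) ≤ Real.exp (L * v) := by
    have e0 := Real.exp_pos (L * u0)
    have e1 := Real.exp_pos (L * v)
    nlinarith
  have hlog : Real.log 2 ≤ L * v - L * u0 := by
    have h2 : (2 : ℝ) ≤ Real.exp (L * v - L * u0) := by
      rw [Real.exp_sub, le_div_iff₀ (Real.exp_pos _)]
      linarith
    calc Real.log 2 ≤ Real.log (Real.exp (L * v - L * u0)) :=
          Real.log_le_log (by norm_num) h2
      _ = L * v - L * u0 := Real.log_exp _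
  have hcle : Real.log 2 / L ≤ v - u0 := by
    rw [div_le_iff₀ hL]
    nlinarith
  -- but v - u0 ≤ u - t0 ≤ log 2 / L, forcing u0 = t0 and v = u
  have huc : u ≤ t0 + Real.log 2 / L := hu.2
  have hveq : v = u := le_antisymm hvr (by linarith)
  -- then y v = y u < δ/2 strictly, giving a strict inequality, contradiction
  have hyvlt : y v < δ / 2 := by rw [hveq]; exact hcon
  have h2exp' : 2 * Real.exp (L * u0) < Real.exp (L * v) := by
    have e0 := Real.exp_pos (L * u0)
    have e1 := Real.exp_pos (L * v)
    nlinarith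
  have hlog' : Real.log 2 < L * v - L * u0 := by
    have h2 : (2 : ℝ) < Real.exp (L * v - L * u0) := by
      rw [Real.exp_sub, lt_div_iff₀ (Real.exp_pos _)]
      linarith
    calc Real.log 2 < Real.log (Real.exp (L * v - L * u0)) :=
          Real.log_lt_log (by norm_num) h2
      _ = L * v - L * u0 := Real.log_exp _
  have hfin : Real.log 2 / L < v - u0 := by
    rw [div_lt_iff₀ hL]
    nlinarith
  linarith [hveq ▸ hvr]

/-- Barbalat-type lemma: if `α` is class-K, `y : ℝ≥0 → ℝ≥0` is continuous,
`∫₀^∞ α(y(t)) dt < ∞`, `y` obeys the one-sided local growth bound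
(`|y'(t)| ≤ L y(t)` whenever `0 < y(t) < ε`), and `y` comes arbitrarily close to `0`
along some divergent time sequence, then `y(t) → 0` as `t → ∞`. -/
theorem barbalat_type
    (α : ℝ → ℝ) (hα0 : α 0 = 0) (hαmono : StrictMonoOn α (Set.Ici 0))
    (hαcont : ContinuousOn α (Set.Ici 0)) (hαnonneg : ∀ r ≥ 0, 0 ≤ α r)
    (y : ℝ → ℝ) (hy : Continuous y) (hynn : ∀ t, 0 ≤ y t)
    (hint : MeasureTheory.IntegrableOn (fun t => α (y t)) (Set.Ici 0))
    (ε L : ℝ) (hε : 0 < ε) (hL : 0 < L)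
    (hgrowth : ∀ t ≥ 0, 0 < y t → y t < ε →
      ∃ d : ℝ, HasDerivAt y d t ∧ |d| ≤ L * y t)
    (hseq : ∃ s : ℕ → ℝ, Filter.Tendsto s Filter.atTop Filter.atTop ∧
      Filter.Tendsto (fun k => y (s k)) Filter.atTop (nhds 0)) :
    Filter.Tendsto y Filter.atTop (nhds 0) := by
  by_contra hnot
  set c : ℝ := Real.log 2 / L with hc_def
  have hc : 0 < c := div_pos (Real.log_pos one_lt_two) hL
  rw [Metric.tendsto_atTop] at hnot
  push_neg at hnot
  obtain ⟨δ0, hδ0, hfr⟩ := hnot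
  set δ : ℝ := min δ0 (ε / 2) with hδ_def
  have hδpos : 0 < δ := lt_min hδ0 (by linarith)
  have hδε : δ < ε := lt_of_le_of_lt (min_le_right _ _) (by linarith)
  have step : ∀ N : ℝ, ∃ t, max 0 N ≤ t ∧ δ ≤ y t := by
    intro N
    obtain ⟨t, htN, hd⟩ := hfr (max 0 N)
    refine ⟨t, htN, ?_⟩
    have : δ0 ≤ dist (y t) 0 := hd
    rw [Real.dist_eq, sub_zero, abs_of_nonneg (hynn t)] at this
    exact le_trans (min_le_left _ _) this
  -- recursively pick times
  set t : ℕ → ℝ := fun n => Nat.rec (Classical.choose (step 0))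
    (fun _ p => Classical.choose (step (p + c + 1))) n with ht_def
  have ht0 : max 0 0 ≤ t 0 ∧ δ ≤ y (t 0) := Classical.choose_spec (step 0)
  have htsucc : ∀ n, max 0 (t n + c + 1) ≤ t (n + 1) ∧ δ ≤ y (t (n + 1)) :=
    fun n => Classical.choose_spec (step (t n + c + 1))
  have htnn : ∀ n, 0 ≤ t n := by
    intro n
    cases n with
    | zero => simpa using ht0.1
    | succ m => exact le_trans (le_max_left _ _) (htsucc m).1
  have htstep : ∀ n, t n + c ≤ t (n + 1) := by
    intro n
    have := le_trans (le_max_right 0 (t n + c + 1)) (htsucc n).1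
    linarith
  have htδ : ∀ n, δ ≤ y (t n) := by
    intro n
    cases n with
    | zero => exact ht0.2
    | succ m => exact (htsucc m).2
  -- persistence on each block
  have hlow : ∀ n, ∀ s ∈ Set.Icc (t n) (t n + c), δ / 2 ≤ y s := by
    intro n s hs
    exact barbalat_persist y hy ε L hL hgrowth δ hδpos hδε (t n) (htnn n) (htδ n) s hs
  set f : ℝ → ℝ := fun s => α (y s) with hf_def
  have hfc : Continuous f := hαcont.comp_continuous hy fun x => hynn x
  have hfnn : ∀ s, 0 ≤ f s := fun s => hαnonneg _ (hynn s)
  have ha : 0 < α (δ / 2) := by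
    have := hαmono (Set.mem_Ici.mpr le_rfl) (Set.mem_Ici.mpr (by positivity))
      (by positivity : (0 : ℝ) < δ / 2)
    rwa [hα0] at this
  have hii : ∀ a b : ℝ, 0 ≤ a → a ≤ b → IntervalIntegrable f volume a b := by
    intro a b h0 hab
    rw [intervalIntegrable_iff_integrableOn_Ioc_of_le hab]
    exact hint.mono_set fun x hx => le_of_lt (lt_of_le_of_lt h0 hx.1)
  -- per-block lower bound
  have hblock : ∀ n, c * α (δ / 2) ≤ ∫ s in (t n)..(t n + c), f s := by
    intro n
    have h1 : (∫ _ in (t n)..(t n + c), α (δ / 2)) ≤ ∫ s in (t n)..(t n + c), f s := by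
      apply intervalIntegral.integral_mono_on (by linarith [htnn n])
        intervalIntegrable_const (hii _ _ (htnn n) (by linarith))
      intro s hs
      exact (hαmono.monotoneOn) (Set.mem_Ici.mpr (by positivity))
        (Set.mem_Ici.mpr (hynn s)) (hlow n s hs)
    rwa [intervalIntegral.integral_const, smul_eq_mul, add_sub_cancel_left] at h1
  -- monotonicity of times
  have htmono : ∀ n, t 0 ≤ t n := by
    intro n
    induction n with
    | zero => exact le_rfl
    | succ m ih => linarith [htstep m]
  -- cumulative lower bound
  have hcum : ∀ n : ℕ, ((n : ℝ) + 1) * (c * α (δ / 2)) ≤ ∫ s in (t 0)..(t n + c), f s := by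
    intro n
    induction n with
    | zero => simpa using hblock 0
    | succ m ih =>
      have i1 : IntervalIntegrable f volume (t 0) (t m + c) :=
        hii _ _ (htnn 0) (by linarith [htmono m])
      have i2 : IntervalIntegrable f volume (t m + c) (t (m + 1)) :=
        hii _ _ (by linarith [htnn m]) (htstep m)
      have i3 : IntervalIntegrable f volume (t (m + 1)) (t (m + 1) + c) :=
        hii _ _ (htnn (m + 1)) (by linarith)
      have hadd1 : (∫ s in (t 0)..(t m + c), f s) + ∫ s in (t m + c)..(t (m + 1) + c), f s
          = ∫ s in (t 0)..(t (m + 1) + c), f s :=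
        intervalIntegral.integral_add_adjacent_intervals i1 (i2.trans i3)
      have hadd2 : (∫ s in (t m + c)..(t (m + 1)), f s) + ∫ s in (t (m + 1))..(t (m + 1) + c), f s
          = ∫ s in (t m + c)..(t (m + 1) + c), f s :=
        intervalIntegral.integral_add_adjacent_intervals i2 i3
      have hnn : 0 ≤ ∫ s in (t m + c)..(t (m + 1)), f s :=
        intervalIntegral.integral_nonneg (htstep m) fun s _ => hfnn s
      have hb := hblock (m + 1)
      push_cast
      push_cast at ih
      linarith
  -- uniform upper bound by the total integral
  have hup : ∀ n : ℕ, (∫ s in (t 0)..(t n + c), f s) ≤ ∫ s in Set.Ici (0 : ℝ), f s := by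
    intro n
    rw [intervalIntegral.integral_of_le (by linarith [htmono n] : t 0 ≤ t n + c)]
    apply setIntegral_mono_set hint
    · exact ae_of_all _ fun s => hfnn s
    · refine HasSubset.Subset.eventuallyLE fun x hx => ?_
      exact le_of_lt (lt_of_le_of_lt (htnn 0) hx.1)
  obtain ⟨N, hN⟩ := exists_nat_gt ((∫ s in Set.Ici (0 : ℝ), f s) / (c * α (δ / 2)))
  have hca : 0 < c * α (δ / 2) := by positivity
  have hNbig : (∫ s in Set.Ici (0 : ℝ), f s) < (N : ℝ) * (c * α (δ / 2)) :=
    (div_lt_iff₀ hca).mp hN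
  have h1 := hcum N
  have h2 := hup N
  nlinarith [hca]
end

section
/- Let (ξ_i)_{i∈ℕ₀} be a Markov chain on a finite set P with transition matrix (p_{i,j}), let (S_i)_{i∈ℕ} be i.i.d. nonnegative random variables independent of (ξ_i), let μ > 1 and λ : P × P → ℝ, and suppose max_{i∈P} ∑_{j∈P} μ p_{i,j} E[e^{-λ(j,i) S_1}] ≤ θ for some θ ∈ [0,1). Define W_k = ∏_{i=0}^{k-1} μ e^{-λ(ξ_{i+1}, ξ_i) S_{i+1}}. Then E[W_ν] ≤ θ^ν for every ν ∈ ℕ. -/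
open MeasureTheory ProbabilityTheory

/-!
Split `E[W_ν]` according to the path `ξ 0, …, ξ ν`, which takes finitely many values and is
independent of the holding times. Given the path `x`, the factors `μ e^{-λ(x (i+1), x i) S (i+1)}`
are independent with means `g (x i) (x (i+1)) := μ E[e^{-λ(x (i+1), x i) S 1}]`, so
`E[W_ν] = E[∏_{i<ν} g (ξ i) (ξ (i+1))]`. Conditioning on `ξ 0, …, ξ n` replaces the factor
`g (ξ n) (ξ (n+1))` by `∑_b p (ξ n) b * g (ξ n) b ≤ θ`, and induction on `n` gives `θ^ν`.
-/

namespace ProbabilityTheory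

variable {Ω : Type*} [MeasurableSpace Ω] {P : Measure Ω}

lemma iIndepFun.integrable_fun_prod_comp {ι : Type*} [Fintype ι] {β : ι → Type*}
    [∀ i, MeasurableSpace (β i)] {X : (i : ι) → Ω → β i} {f : (i : ι) → β i → ℝ}
    (hX : iIndepFun X P) (mX : ∀ i, AEMeasurable (X i) P)
    (hf : ∀ i, Integrable (f i) (P.map (X i))) :
    Integrable (fun ω ↦ ∏ i, f i (X i ω)) P := by
  have := hX.isProbabilityMeasure
  have hpi := Integrable.fintype_prod_dep hf
  rw [← hX.map_fun_eq_pi_map mX] at hpi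
  exact hpi.comp_aemeasurable (aemeasurable_pi_lambda _ mX)

lemma IndepFun.integral_comp_eq_integral_integral [IsFiniteMeasure P] {α β : Type*}
    [Finite α] [MeasurableSpace α] [MeasurableSingletonClass α] [MeasurableSpace β]
    {X : Ω → α} {Y : Ω → β} (hXY : IndepFun X Y P) (hX : Measurable X) (hY : Measurable Y)
    {F : α → β → ℝ} (hF : ∀ a, Measurable (F a))
    (hint : ∀ a, Integrable (fun ω ↦ F a (Y ω)) P) :
    ∫ ω, F (X ω) (Y ω) ∂P = ∫ ω, ∫ ω', F (X ω) (Y ω') ∂P ∂P := by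
  have hFm : Measurable (Function.uncurry F) := measurable_from_prod_countable_right hF
  have hint' : Integrable (Function.uncurry F) ((P.map X).prod (P.map Y)) :=
    (integrable_prod_iff hFm.aestronglyMeasurable).2
      ⟨ae_of_all _ fun a ↦ (integrable_map_measure (hF a).aestronglyMeasurable
        hY.aemeasurable).2 (hint a), Integrable.of_finite⟩
  calc ∫ ω, F (X ω) (Y ω) ∂P = ∫ z, Function.uncurry F z ∂(P.map fun ω ↦ (X ω, Y ω)) :=
        (integral_map (hX.prodMk hY).aemeasurable hFm.aestronglyMeasurable).symm
    _ = ∫ a, ∫ b, F a b ∂(P.map Y) ∂(P.map X) := by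
        rw [(indepFun_iff_map_prod_eq_prod_map_map hX.aemeasurable hY.aemeasurable).1 hXY,
          integral_prod _ hint']
        rfl
    _ = ∫ ω, ∫ ω', F (X ω) (Y ω') ∂P ∂P := by
        rw [integral_map hX.aemeasurable (Measurable.of_discrete).aestronglyMeasurable]
        simp only [integral_map hY.aemeasurable (hF _).aestronglyMeasurable]

lemma integral_prod_comp_succ_of_identDistrib {β : Type*} [MeasurableSpace β] {S : ℕ → Ω → β}
    (hSmeas : ∀ i, Measurable (S i)) (hSindep : iIndepFun S P)
    (hSident : ∀ i, IdentDistrib (S i) (S 1) P P) {n : ℕ} {f : Fin n → β → ℝ}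
    (hf : ∀ i, Measurable (f i)) :
    ∫ ω, ∏ i, f i (S (i + 1) ω) ∂P = ∏ i, ∫ ω, f i (S 1 ω) ∂P := by
  have hshift : iIndepFun (fun i : Fin n ↦ S (i + 1)) P :=
    hSindep.precomp fun i j h ↦ Fin.ext (Nat.succ_injective h)
  rw [hshift.integral_fun_prod_comp (fun i ↦ (hSmeas _).aemeasurable)
    (fun i ↦ (hf i).aestronglyMeasurable)]
  exact Finset.prod_congr rfl fun i _ ↦ ((hSident _).comp (hf i)).integral_eq

lemma integrable_prod_comp_succ_of_identDistrib {β : Type*} [MeasurableSpace β] {S : ℕ → Ω → β}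
    (hSmeas : ∀ i, Measurable (S i)) (hSindep : iIndepFun S P)
    (hSident : ∀ i, IdentDistrib (S i) (S 1) P P) {n : ℕ} {f : Fin n → β → ℝ}
    (hf : ∀ i, Measurable (f i)) (hint : ∀ i, Integrable (fun ω ↦ f i (S 1 ω)) P) :
    Integrable (fun ω ↦ ∏ i, f i (S (i + 1) ω)) P := by
  have hshift : iIndepFun (fun i : Fin n ↦ S (i + 1)) P :=
    hSindep.precomp fun i j h ↦ Fin.ext (Nat.succ_injective h)
  refine hshift.integrable_fun_prod_comp (fun i ↦ (hSmeas _).aemeasurable) fun i ↦ ?_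
  rw [(hSident _).map_eq, integrable_map_measure (hf i).aestronglyMeasurable
    (hSmeas 1).aemeasurable]
  exact hint i

end ProbabilityTheory

section MarkovChain

variable {Ω : Type*} [MeasurableSpace Ω] {P : Measure Ω}
  {ι : Type*} [MeasurableSpace ι] {ξ : ℕ → Ω → ι} {p : ι → ι → ℝ}

def IsMarkovChain (P : Measure Ω) (ξ : ℕ → Ω → ι) (p : ι → ι → ℝ) : Prop :=
  ∀ (i : ℕ) (b : ι),
    P[(fun ω => Set.indicator {ω' | ξ (i + 1) ω' = b} (fun _ => (1 : ℝ)) ω)|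
        MeasurableSpace.comap (fun ω (k : Fin (i + 1)) => ξ k ω) inferInstance]
      =ᵐ[P] fun ω => p (ξ i ω) b

variable [Fintype ι] [MeasurableSingletonClass ι]

section FiniteMeasure

variable [IsFiniteMeasure P]

lemma integrable_comp_path (hξ : ∀ i, Measurable (ξ i)) {n : ℕ} (φ : (Fin (n + 1) → ι) → ℝ) :
    Integrable (fun ω ↦ φ (fun k ↦ ξ k ω)) P :=
  Integrable.of_finite.comp_measurable (measurable_pi_lambda _ fun k ↦ hξ k)

lemma integrable_comp_path_mul_indicator (hξ : ∀ i, Measurable (ξ i)) {n : ℕ}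
    (φ : (Fin (n + 1) → ι) → ℝ) (m : ℕ) (b : ι) :
    Integrable (fun ω ↦ φ (fun k ↦ ξ k ω) * {ω' | ξ m ω' = b}.indicator (fun _ ↦ (1 : ℝ)) ω) P :=
  (integrable_comp_path hξ φ).mul_bdd (c := 1)
    (aestronglyMeasurable_const.indicator (hξ m (measurableSet_singleton b)))
    (ae_of_all _ fun ω ↦ by by_cases h : ξ m ω = b <;> simp [h])

lemma IsMarkovChain.integral_comp_path_mul_indicator_eq (hmarkov : IsMarkovChain P ξ p)
    (hξ : ∀ i, Measurable (ξ i)) {n : ℕ} {b : ι} (φ : (Fin (n + 1) → ι) → ℝ) :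
    ∫ ω, φ (fun k ↦ ξ k ω) * {ω' | ξ (n + 1) ω' = b}.indicator (fun _ ↦ (1 : ℝ)) ω ∂P =
      ∫ ω, φ (fun k ↦ ξ k ω) * p (ξ n ω) b ∂P := by
  have hpath : Measurable fun ω (k : Fin (n + 1)) ↦ ξ k ω := measurable_pi_lambda _ fun k ↦ hξ k
  have hφ : StronglyMeasurable[MeasurableSpace.comap (fun ω (k : Fin (n + 1)) => ξ k ω)
      inferInstance] fun ω ↦ φ (fun k ↦ ξ k ω) :=
    (Measurable.of_discrete.comp (comap_measurable _)).stronglyMeasurable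
  have hind : Integrable ({ω' | ξ (n + 1) ω' = b}.indicator fun _ ↦ (1 : ℝ)) P :=
    (integrable_const 1).indicator (hξ _ (measurableSet_singleton b))
  calc _ = ∫ ω, (P[(fun ω ↦ φ (fun k ↦ ξ k ω)) * {ω' | ξ (n + 1) ω' = b}.indicator (fun _ ↦ 1) |
          MeasurableSpace.comap (fun ω (k : Fin (n + 1)) => ξ k ω) inferInstance]) ω ∂P :=
        (integral_condExp hpath.comap_le).symm
    _ = _ := by
        refine integral_congr_ae ?_
        filter_upwards [condExp_mul_of_stronglyMeasurable_left hφ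
          (integrable_comp_path_mul_indicator hξ φ (n + 1) b) hind, hmarkov n b] with ω h1 h2
        rw [h1, Pi.mul_apply, h2]

lemma IsMarkovChain.integral_comp_path_next_eq (hmarkov : IsMarkovChain P ξ p)
    (hξ : ∀ i, Measurable (ξ i)) {n : ℕ} (h : (Fin (n + 1) → ι) → ι → ℝ) :
    ∫ ω, h (fun k ↦ ξ k ω) (ξ (n + 1) ω) ∂P =
      ∫ ω, ∑ b, p (ξ n ω) b * h (fun k ↦ ξ k ω) b ∂P := by
  have hsplit : ∀ ω, h (fun k ↦ ξ k ω) (ξ (n + 1) ω) =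
      ∑ b, h (fun k ↦ ξ k ω) b * {ω' | ξ (n + 1) ω' = b}.indicator (fun _ ↦ (1 : ℝ)) ω := by
    intro ω
    classical
    simp [Set.indicator_apply]
  calc _ = ∑ b, ∫ ω, h (fun k ↦ ξ k ω) b *
          {ω' | ξ (n + 1) ω' = b}.indicator (fun _ ↦ (1 : ℝ)) ω ∂P := by
        simp_rw [hsplit]
        exact integral_finsetSum _ fun b _ ↦ integrable_comp_path_mul_indicator hξ (h · b) _ b
    _ = ∑ b, ∫ ω, p (ξ n ω) b * h (fun k ↦ ξ k ω) b ∂P := by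
        refine Finset.sum_congr rfl fun b _ ↦ ?_
        simp_rw [hmarkov.integral_comp_path_mul_indicator_eq hξ (h · b), mul_comm]
    _ = _ := (integral_finsetSum _ fun b _ ↦
          integrable_comp_path hξ fun y ↦ p (y (Fin.last n)) b * h y b).symm

end FiniteMeasure

lemma IsMarkovChain.integral_prod_le_pow [IsProbabilityMeasure P] (hmarkov : IsMarkovChain P ξ p)
    (hξ : ∀ i, Measurable (ξ i)) {g : ι → ι → ℝ} (hg : ∀ a b, 0 ≤ g a b) {θ : ℝ} (hθ : 0 ≤ θ)
    (hbound : ∀ a, ∑ b, p a b * g a b ≤ θ) (n : ℕ) :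
    ∫ ω, ∏ i : Fin n, g (ξ i ω) (ξ (i + 1) ω) ∂P ≤ θ ^ n := by
  induction n with
  | zero => simp
  | succ n ih =>
    set Φ : (Fin (n + 1) → ι) → ℝ := fun y ↦ ∏ i : Fin n, g (y i.castSucc) (y i.succ)
    have hΦ : ∀ ω, Φ (fun k ↦ ξ k ω) = ∏ i : Fin n, g (ξ i ω) (ξ (i + 1) ω) := by simp [Φ]
    have hΦ_nonneg : ∀ y, 0 ≤ Φ y := fun y ↦ Finset.prod_nonneg fun i _ ↦ hg _ _
    calc ∫ ω, ∏ i : Fin (n + 1), g (ξ i ω) (ξ (i + 1) ω) ∂P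
        = ∫ ω, Φ (fun k ↦ ξ k ω) * g (ξ n ω) (ξ (n + 1) ω) ∂P := by
          simp [Fin.prod_univ_castSucc, hΦ]
      _ = ∫ ω, ∑ b, p (ξ n ω) b * (Φ (fun k ↦ ξ k ω) * g (ξ n ω) b) ∂P :=
          hmarkov.integral_comp_path_next_eq hξ fun y c ↦ Φ y * g (y (Fin.last n)) c
      _ ≤ ∫ ω, θ * Φ (fun k ↦ ξ k ω) ∂P := by
          refine integral_mono (integrable_comp_path hξ fun y ↦ ∑ b,
              p (y (Fin.last n)) b * (Φ y * g (y (Fin.last n)) b))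
            ((integrable_comp_path hξ Φ).const_mul θ) fun ω ↦ ?_
          simp only [mul_left_comm _ (Φ _), ← Finset.mul_sum, mul_comm θ]
          exact mul_le_mul_of_nonneg_left (hbound _) (hΦ_nonneg fun k ↦ ξ k ω)
      _ ≤ θ * θ ^ n := by
          rw [integral_const_mul]
          simp only [hΦ]
          exact mul_le_mul_of_nonneg_left ih hθ
      _ = θ ^ (n + 1) := (pow_succ' θ n).symm

end MarkovChain

theorem markov_product_geometric_decay_general {Ω : Type*} [MeasurableSpace Ω]
    (P : Measure Ω) [IsProbabilityMeasure P]
    {ι : Type*} [Fintype ι] [MeasurableSpace ι] [MeasurableSingletonClass ι]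
    (ξ : ℕ → Ω → ι) (S : ℕ → Ω → ℝ)
    (hξmeas : ∀ i, Measurable (ξ i)) (hSmeas : ∀ i, Measurable (S i))
    (p : ι → ι → ℝ)
    -- Markov property: the conditional law of `ξ (i+1)` given `ξ 0, …, ξ i` is `p (ξ i) ·`
    (hmarkov : ∀ (i : ℕ) (b : ι),
      P[(fun ω => Set.indicator {ω' | ξ (i + 1) ω' = b} (fun _ => (1 : ℝ)) ω)|
          MeasurableSpace.comap (fun ω (k : Fin (i + 1)) => ξ k ω) inferInstance]
        =ᵐ[P] fun ω => p (ξ i ω) b)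
    (hSindep : iIndepFun S P)
    (hSident : ∀ i, IdentDistrib (S i) (S 1) P P)
    (hindep : IndepFun (fun ω i => ξ i ω) (fun ω i => S i ω) P)
    (μ : ℝ) (hμ : 1 < μ) (lam : ι → ι → ℝ)
    (hint : ∀ a b, Integrable (fun ω => Real.exp (-lam a b * S 1 ω)) P)
    (θ : ℝ) (hθ0 : 0 ≤ θ)
    (hbound : ∀ a : ι, ∑ b, μ * p a b * ∫ ω, Real.exp (-lam b a * S 1 ω) ∂P ≤ θ) :
    ∀ ν : ℕ,
      (∫ ω, ∏ i ∈ Finset.range ν,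
          (μ * Real.exp (-lam (ξ (i + 1) ω) (ξ i ω) * S (i + 1) ω)) ∂P) ≤ θ ^ ν := by
  intro ν
  let F : (Fin (ν + 1) → ι) → (ℕ → ℝ) → ℝ := fun x s ↦
    ∏ i : Fin ν, μ * Real.exp (-lam (x i.succ) (x i.castSucc) * s (i + 1))
  have hpath_indep : IndepFun (fun ω (k : Fin (ν + 1)) ↦ ξ k ω) (fun ω i ↦ S i ω) P :=
    hindep.comp (measurable_pi_lambda _ fun k ↦ measurable_pi_apply _) measurable_id
  have hF_integrable : ∀ x, Integrable (fun ω ↦ F x fun i ↦ S i ω) P := fun x ↦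
    integrable_prod_comp_succ_of_identDistrib hSmeas hSindep hSident
      (f := fun i t ↦ μ * Real.exp (-lam (x i.succ) (x i.castSucc) * t)) (fun i ↦ by fun_prop)
      fun i ↦ (hint _ _).const_mul μ
  have hF_integral : ∀ x, ∫ ω, F x (fun i ↦ S i ω) ∂P =
      ∏ i : Fin ν, μ * ∫ ω, Real.exp (-lam (x i.succ) (x i.castSucc) * S 1 ω) ∂P := fun x ↦ by
    simp only [F, integral_prod_comp_succ_of_identDistrib hSmeas hSindep hSident
      (f := fun i t ↦ μ * Real.exp (-lam (x i.succ) (x i.castSucc) * t)) (fun i ↦ by fun_prop),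
      integral_const_mul]
  calc _ = ∫ ω, F (fun k ↦ ξ k ω) (fun i ↦ S i ω) ∂P := by
        congr with ω
        simp only [F, Fin.val_succ, Fin.val_castSucc]
        exact (Fin.prod_univ_eq_prod_range
          (fun i ↦ μ * Real.exp (-lam (ξ (i + 1) ω) (ξ i ω) * S (i + 1) ω)) ν).symm
    _ = ∫ ω, ∫ ω', F (fun k ↦ ξ k ω) (fun i ↦ S i ω') ∂P ∂P :=
        hpath_indep.integral_comp_eq_integral_integral (measurable_pi_lambda _ fun k ↦ hξmeas k)
          (measurable_pi_lambda _ hSmeas) (fun x ↦ by fun_prop) hF_integrable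
    _ = ∫ ω, ∏ i : Fin ν, μ * ∫ ω', Real.exp (-lam (ξ (i + 1) ω) (ξ i ω) * S 1 ω') ∂P ∂P := by
        simp [hF_integral]
    _ ≤ θ ^ ν :=
        IsMarkovChain.integral_prod_le_pow hmarkov hξmeas
          (g := fun a b ↦ μ * ∫ ω, Real.exp (-lam b a * S 1 ω) ∂P)
          (fun a b ↦ mul_nonneg (by linarith) (integral_nonneg fun _ ↦ (Real.exp_pos _).le)) hθ0
          (fun a ↦ (Finset.sum_congr rfl fun b _ ↦ by ring).trans_le (hbound a)) ν

/-- Geometric decay of the expected product of growth factors along a semi-Markov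
switching signal: `(ξ i)` is a Markov chain on a finite set with transition matrix `p`,
`(S i)` are i.i.d. nonnegative holding times independent of `(ξ i)`, and the one-step
bound `max_a ∑_b μ p a b E[e^{-λ(b,a) S 1}] ≤ θ < 1` gives
`E[∏_{i<ν} μ e^{-λ(ξ (i+1), ξ i) S (i+1)}] ≤ θ^ν`. -/
theorem markov_product_geometric_decay {Ω : Type*} [MeasurableSpace Ω]
    (P : Measure Ω) [IsProbabilityMeasure P]
    {ι : Type*} [Fintype ι] [DecidableEq ι] [MeasurableSpace ι] [MeasurableSingletonClass ι]
    (ξ : ℕ → Ω → ι) (S : ℕ → Ω → ℝ)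
    (hξmeas : ∀ i, Measurable (ξ i)) (hSmeas : ∀ i, Measurable (S i))
    (p : ι → ι → ℝ) (hp0 : ∀ a b, 0 ≤ p a b) (hp1 : ∀ a, ∑ b, p a b = 1)
    -- Markov property: the conditional law of `ξ (i+1)` given `ξ 0, …, ξ i` is `p (ξ i) ·`
    (hmarkov : ∀ (i : ℕ) (b : ι),
      P[(fun ω => Set.indicator {ω' | ξ (i + 1) ω' = b} (fun _ => (1 : ℝ)) ω)|
          MeasurableSpace.comap (fun ω (k : Fin (i + 1)) => ξ k ω) inferInstance]
        =ᵐ[P] fun ω => p (ξ i ω) b)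
    (hSnn : ∀ i ω, 0 ≤ S i ω)
    (hSindep : iIndepFun S P)
    (hSident : ∀ i, IdentDistrib (S i) (S 1) P P)
    (hindep : IndepFun (fun ω i => ξ i ω) (fun ω i => S i ω) P)
    (μ : ℝ) (hμ : 1 < μ) (lam : ι → ι → ℝ)
    (hint : ∀ a b, Integrable (fun ω => Real.exp (-lam a b * S 1 ω)) P)
    (θ : ℝ) (hθ0 : 0 ≤ θ) (hθ1 : θ < 1)
    (hbound : ∀ a : ι, ∑ b, μ * p a b * ∫ ω, Real.exp (-lam b a * S 1 ω) ∂P ≤ θ) :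
    ∀ ν : ℕ,
      (∫ ω, ∏ i ∈ Finset.range ν,
          (μ * Real.exp (-lam (ξ (i + 1) ω) (ξ i ω) * S (i + 1) ω)) ∂P) ≤ θ ^ ν :=
  markov_product_geometric_decay_general P ξ S hξmeas hSmeas p hmarkov hSindep hSident hindep μ hμ
    lam hint θ hθ0 hbound
end
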